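/- arXiv:2603.27592 — 7 statements merged into one kernel-verified Lean document; each statement's English description precedes it below -/
import Mathlib

section
/- Let X be a nonempty finite type, p : X → ℝ a probability vector, r, V*, V̂ : X → ℝ, γ ∈ [0,1), and Q̂, Q* ∈ ℝ satisfying the Bellman relation Q* = Σ_{x'} p(x')·(r(x') + γ·V*(x')). On a probability space, let (X_k)_{k≥1} be an i.i.d. sequence of X-valued random variables with ℙ(X_k = x) = p(x) for all x, and let (W_k)_{k≥1} be an i.i.d. sequence of integrable real random variables with mean 0, independent of (X_k). Define the Bellman deviation d_k = Q̂ − r(X_k) − W_k − γ·V̂(X_k). Then almost surely, (1/n)·Σ_{k=1}^n d_k converges as n → ∞ to Q̂ − Q* + γ·Σ_{x'} p(x')·(V*(x') − V̂(x')). -/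
open MeasureTheory ProbabilityTheory Filter Finset

/-- **Theorem 1 (no attack):** almost surely, the Bellman deviation process mean
converges to `Q̂ − Q* + γ·Σ_{x'} p(x')·(V*(x') − V̂(x'))`. -/
theorem bdpm_limit_no_attack
    {X : Type*} [Fintype X] [Nonempty X] [MeasurableSpace X] [MeasurableSingletonClass X]
    (p : X → ℝ) (hp0 : ∀ x, 0 ≤ p x) (hp1 : ∑ x, p x = 1)
    (r Vstar Vhat : X → ℝ) (γ : ℝ) (hγ0 : 0 ≤ γ) (hγ1 : γ < 1)
    (Qhat Qstar : ℝ)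
    (hBell : Qstar = ∑ x, p x * (r x + γ * Vstar x))
    {Ω : Type*} [MeasurableSpace Ω] (μ : Measure Ω) [IsProbabilityMeasure μ]
    (Xs : ℕ → Ω → X) (W : ℕ → Ω → ℝ)
    (hXmeas : ∀ k, Measurable (Xs k))
    (hWmeas : ∀ k, Measurable (W k))
    -- (X_k) is an i.i.d. sequence with ℙ(X_k = x) = p(x)
    (hXindep : iIndepFun Xs μ)
    (hXdist : ∀ k x, μ {ω | Xs k ω = x} = ENNReal.ofReal (p x))
    -- (W_k) is an i.i.d. sequence of integrable centered random variables
    (hWindep : iIndepFun W μ)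
    (hWident : ∀ k, IdentDistrib (W k) (W 0) μ μ)
    (hWint : ∀ k, Integrable (W k) μ)
    (hWmean : ∀ k, ∫ ω, W k ω ∂μ = 0)
    -- the sequence (W_k) is independent of the sequence (X_k)
    (hWXindep : IndepFun (fun ω k => Xs k ω) (fun ω k => W k ω) μ) :
    ∀ᵐ ω ∂μ, Tendsto
      (fun n : ℕ => (1 / (n : ℝ)) *
        ∑ k ∈ Finset.range n, (Qhat - r (Xs k ω) - W k ω - γ * Vhat (Xs k ω)))
      atTop (nhds (Qhat - Qstar + γ * ∑ x, p x * (Vstar x - Vhat x))) := by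
  -- the function applied to the X-samples
  set f : X → ℝ := fun x => Qhat - r x - γ * Vhat x with hf
  have hfmeas : Measurable f := measurable_of_countable f
  set Y : ℕ → Ω → ℝ := fun k ω => f (Xs k ω) with hY
  -- identical distribution of the Xs k
  have hXident : ∀ k, IdentDistrib (Xs k) (Xs 0) μ μ := by
    intro k
    refine ⟨(hXmeas k).aemeasurable, (hXmeas 0).aemeasurable, ?_⟩
    refine MeasureTheory.Measure.ext_of_singleton fun x => ?_
    rw [Measure.map_apply (hXmeas k) (measurableSet_singleton x),
      Measure.map_apply (hXmeas 0) (measurableSet_singleton x)]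
    have h1 := hXdist k x
    have h2 := hXdist 0 x
    show μ (Xs k ⁻¹' {x}) = μ (Xs 0 ⁻¹' {x})
    have : Xs k ⁻¹' {x} = {ω | Xs k ω = x} := rfl
    rw [this, h1]
    have : Xs 0 ⁻¹' {x} = {ω | Xs 0 ω = x} := rfl
    rw [this, h2]
  have hYident : ∀ k, IdentDistrib (Y k) (Y 0) μ μ := fun k =>
    (hXident k).comp hfmeas
  have : IsProbabilityMeasure (Measure.map (Xs 0) μ) :=
    Measure.isProbabilityMeasure_map (hXmeas 0).aemeasurable
  have hYint : Integrable (Y 0) μ :=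
    (integrable_map_measure hfmeas.aestronglyMeasurable (hXmeas 0).aemeasurable).mp
      Integrable.of_finite
  have hYindep : Pairwise (Function.onFun (IndepFun · · μ) Y) := fun i j hij =>
    (hXindep.indepFun hij).comp hfmeas hfmeas
  -- SLLN for Y
  have hYlim := strong_law_ae_real Y hYint hYindep hYident
  -- compute the mean of Y 0
  classical
  have hmap : Measure.map (Xs 0) μ = Measure.sum (fun x => (ENNReal.ofReal (p x)) • Measure.dirac x) := by
    refine MeasureTheory.Measure.ext_of_singleton fun x => ?_
    rw [Measure.map_apply (hXmeas 0) (measurableSet_singleton x)]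
    have hpre : Xs 0 ⁻¹' {x} = {ω | Xs 0 ω = x} := rfl
    rw [hpre, hXdist 0 x, Measure.sum_apply _ (measurableSet_singleton x)]
    have h1 : ∀ i : X, ((ENNReal.ofReal (p i)) • Measure.dirac i) {x}
        = if i = x then ENNReal.ofReal (p x) else 0 := by
      intro i
      rw [Measure.smul_apply, Measure.dirac_apply' _ (measurableSet_singleton x)]
      by_cases h : i = x <;> simp [h, Set.indicator_apply]
    simp_rw [h1]
    rw [tsum_ite_eq]
  have hmean : ∫ ω, Y 0 ω ∂μ = ∑ x, p x * f x := by
    rw [show (∫ ω, Y 0 ω ∂μ) = ∫ ω, f (Xs 0 ω) ∂μ from rfl,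
      ← integral_map (hXmeas 0).aemeasurable hfmeas.aestronglyMeasurable,
      integral_fintype (by exact Integrable.of_finite)]
    refine Finset.sum_congr rfl fun x _ => ?_
    rw [Measure.real_def, hmap, Measure.sum_apply _ (measurableSet_singleton x)]
    have h1 : ∀ i : X, ((ENNReal.ofReal (p i)) • Measure.dirac i) {x}
        = if i = x then ENNReal.ofReal (p x) else 0 := by
      intro i
      rw [Measure.smul_apply, Measure.dirac_apply' _ (measurableSet_singleton x)]
      by_cases h : i = x <;> simp [h, Set.indicator_apply]
    simp_rw [h1]
    rw [tsum_ite_eq, ENNReal.toReal_ofReal (hp0 x), smul_eq_mul]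
  -- SLLN for W
  have hWlim := strong_law_ae_real W (hWint 0)
    (fun i j hij => hWindep.indepFun hij) hWident
  rw [show μ[W 0] = (0 : ℝ) from hWmean 0] at hWlim
  -- combine
  filter_upwards [hYlim, hWlim] with ω hYω hWω
  have hcomb := hYω.sub hWω
  rw [sub_zero] at hcomb
  have hval : μ[Y 0] = Qhat - Qstar + γ * ∑ x, p x * (Vstar x - Vhat x) := by
    rw [hmean, hBell, Finset.mul_sum]
    have h1 : ∑ x, p x * f x
        = ∑ x, (p x * Qhat - (p x * (r x + γ * Vstar x) - γ * (p x * (Vstar x - Vhat x)))) := by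
      refine Finset.sum_congr rfl fun x _ => ?_
      simp only [hf]; ring
    rw [h1, Finset.sum_sub_distrib, Finset.sum_sub_distrib, ← Finset.sum_mul, hp1, one_mul]
    ring
  rw [hval] at hcomb
  refine hcomb.congr fun n => ?_
  have hk : ∀ k, Qhat - r (Xs k ω) - W k ω - γ * Vhat (Xs k ω) = Y k ω - W k ω := by
    intro k; simp only [hY, hf]; ring
  have hs : ∑ k ∈ Finset.range n, (Y k ω - W k ω)
      = (∑ k ∈ Finset.range n, Y k ω) - ∑ k ∈ Finset.range n, W k ω :=
    Finset.sum_sub_distrib _ _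
  rw [Finset.sum_congr rfl fun k _ => hk k, hs, mul_sub, one_div,
    inv_mul_eq_div, inv_mul_eq_div]
end

section
/- Let X be a nonempty finite type, p : X → ℝ a probability vector, r, V*, V̂ : X → ℝ, γ ∈ [0,1), ε ≥ 0, and Q̂, Q* ∈ ℝ satisfying the Bellman relation Q* = Σ_{x'} p(x')·(r(x') + γ·V*(x')). Assume |Q̂ − Q*| ≤ ε and |V̂(x) − V*(x)| ≤ ε for all x ∈ X. On a probability space, let (X_k)_{k≥1} be i.i.d. X-valued with ℙ(X_k = x) = p(x), and (W_k)_{k≥1} i.i.d. integrable real random variables with mean 0, independent of (X_k). Define d_k = Q̂ − r(X_k) − W_k − γ·V̂(X_k). Then almost surely, limsup_{n→∞} |(1/n)·Σ_{k=1}^n d_k| ≤ (1 + γ)·ε. -/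
open MeasureTheory ProbabilityTheory Filter Finset

/-- **Theorem 2:** when no attack occurs, the magnitude of the Bellman deviation
process mean is asymptotically upper-bounded by `(1+γ)·ε` almost surely. -/
theorem bdpm_limsup_secure
    {X : Type*} [Fintype X] [Nonempty X] [MeasurableSpace X] [MeasurableSingletonClass X]
    (p : X → ℝ) (hp0 : ∀ x, 0 ≤ p x) (hp1 : ∑ x, p x = 1)
    (r Vstar Vhat : X → ℝ) (γ : ℝ) (hγ0 : 0 ≤ γ) (hγ1 : γ < 1)
    (ε : ℝ) (hε : 0 ≤ ε)
    (Qhat Qstar : ℝ)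
    (hBell : Qstar = ∑ x, p x * (r x + γ * Vstar x))
    (hQ : |Qhat - Qstar| ≤ ε)
    (hV : ∀ x, |Vhat x - Vstar x| ≤ ε)
    {Ω : Type*} [MeasurableSpace Ω] (μ : Measure Ω) [IsProbabilityMeasure μ]
    (Xs : ℕ → Ω → X) (W : ℕ → Ω → ℝ)
    (hXmeas : ∀ k, Measurable (Xs k))
    (hWmeas : ∀ k, Measurable (W k))
    -- (X_k) is an i.i.d. sequence with ℙ(X_k = x) = p(x)
    (hXindep : iIndepFun Xs μ)
    (hXdist : ∀ k x, μ {ω | Xs k ω = x} = ENNReal.ofReal (p x))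
    -- (W_k) is an i.i.d. sequence of integrable centered random variables
    (hWindep : iIndepFun W μ)
    (hWident : ∀ k, IdentDistrib (W k) (W 0) μ μ)
    (hWint : ∀ k, Integrable (W k) μ)
    (hWmean : ∀ k, ∫ ω, W k ω ∂μ = 0)
    -- the sequence (W_k) is independent of the sequence (X_k)
    (hWXindep : IndepFun (fun ω k => Xs k ω) (fun ω k => W k ω) μ) :
    ∀ᵐ ω ∂μ, Filter.limsup
      (fun n : ℕ => |(1 / (n : ℝ)) *
        ∑ k ∈ Finset.range n, (Qhat - r (Xs k ω) - W k ω - γ * Vhat (Xs k ω))|)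
      atTop ≤ (1 + γ) * ε := by
  classical
  set f : X → ℝ := fun x => r x + γ * Vhat x with hf
  have hfmeas : Measurable f := measurable_of_countable f
  -- the X's are identically distributed
  have hmapeq : ∀ i, μ.map (Xs i) = μ.map (Xs 0) := by
    intro i
    apply Measure.ext_of_singleton
    intro x
    rw [Measure.map_apply (hXmeas i) (measurableSet_singleton x),
      Measure.map_apply (hXmeas 0) (measurableSet_singleton x)]
    show μ {ω | Xs i ω = x} = μ {ω | Xs 0 ω = x}
    rw [hXdist, hXdist]
  set Y : ℕ → Ω → ℝ := fun k ω => f (Xs k ω) with hY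
  have hYident : ∀ i, IdentDistrib (Y i) (Y 0) μ μ := by
    intro i
    have h0 : IdentDistrib (Xs i) (Xs 0) μ μ :=
      ⟨(hXmeas i).aemeasurable, (hXmeas 0).aemeasurable, hmapeq i⟩
    exact h0.comp hfmeas
  have hYindep : Pairwise (Function.onFun (IndepFun · · μ) Y) := by
    intro i j hij
    exact (hXindep.indepFun hij).comp hfmeas hfmeas
  -- integrability of Y 0
  obtain ⟨C, hC⟩ : ∃ C : ℝ, ∀ x : X, |f x| ≤ C :=
    ⟨Finset.univ.sup' Finset.univ_nonempty (fun x => |f x|),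
      fun x => Finset.le_sup' (fun x => |f x|) (Finset.mem_univ x)⟩
  have hYint : Integrable (Y 0) μ := by
    apply Integrable.mono' (integrable_const C)
      ((hfmeas.comp (hXmeas 0)).aestronglyMeasurable)
    exact Filter.Eventually.of_forall fun ω => hC _
  -- compute the mean
  have hmean : ∫ ω, Y 0 ω ∂μ = ∑ x, p x * f x := by
    have h1 : ∫ ω, Y 0 ω ∂μ = ∫ x, f x ∂(μ.map (Xs 0)) :=
      (integral_map (hXmeas 0).aemeasurable hfmeas.aestronglyMeasurable).symm
    rw [h1, integral_fintype _ ]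
    · apply Finset.sum_congr rfl
      intro x _
      have : (μ.map (Xs 0)) {x} = ENNReal.ofReal (p x) := by
        rw [Measure.map_apply (hXmeas 0) (measurableSet_singleton x)]
        exact hXdist 0 x
      rw [measureReal_def, this, ENNReal.toReal_ofReal (hp0 x)]
      simp [mul_comm]
    · exact (integrable_map_measure hfmeas.aestronglyMeasurable
        (hXmeas 0).aemeasurable).mpr hYint
  -- strong law for Y and W
  have hSLY := strong_law_ae_real Y hYint hYindep hYident
  have hSLW := strong_law_ae_real W (hWint 0)
    (fun i j hij => hWindep.indepFun hij) hWident
  rw [hmean] at hSLY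
  rw [hWmean 0] at hSLW
  -- bound the limit
  set L : ℝ := Qhat - ∑ x, p x * f x with hL
  have hLbound : |L| ≤ (1 + γ) * ε := by
    have hdec : L = (Qhat - Qstar) + γ * ∑ x, p x * (Vstar x - Vhat x) := by
      have key : ∑ x, p x * f x
          = ∑ x, p x * (r x + γ * Vstar x) - γ * ∑ x, p x * (Vstar x - Vhat x) := by
        rw [Finset.mul_sum, ← Finset.sum_sub_distrib]
        apply Finset.sum_congr rfl
        intro x _
        simp only [hf]
        ring
      rw [hL, hBell, key]
      ring
    have h2 : |∑ x, p x * (Vstar x - Vhat x)| ≤ ε := by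
      calc |∑ x, p x * (Vstar x - Vhat x)| ≤ ∑ x, |p x * (Vstar x - Vhat x)| :=
            Finset.abs_sum_le_sum_abs _ _
        _ ≤ ∑ x, p x * ε := by
            apply Finset.sum_le_sum
            intro x _
            rw [abs_mul, abs_of_nonneg (hp0 x)]
            have := hV x
            rw [abs_sub_comm] at this
            exact mul_le_mul_of_nonneg_left this (hp0 x)
        _ = ε := by rw [← Finset.sum_mul, hp1, one_mul]
    calc |L| ≤ |Qhat - Qstar| + |γ * ∑ x, p x * (Vstar x - Vhat x)| := by
          rw [hdec]; exact abs_add_le _ _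
      _ ≤ ε + γ * ε := by
          gcongr
          rw [abs_mul, abs_of_nonneg hγ0]
          exact mul_le_mul_of_nonneg_left h2 hγ0
      _ = (1 + γ) * ε := by ring
  filter_upwards [hSLY, hSLW] with ω hωY hωW
  have hT : Tendsto (fun n : ℕ => (1 / (n : ℝ)) *
      ∑ k ∈ Finset.range n, (Qhat - r (Xs k ω) - W k ω - γ * Vhat (Xs k ω)))
      atTop (nhds L) := by
    have hTend : Tendsto (fun n : ℕ => Qhat - (∑ k ∈ Finset.range n, Y k ω) / n
        - (∑ k ∈ Finset.range n, W k ω) / n) atTop (nhds (Qhat - (∑ x, p x * f x) - 0)) :=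
      (tendsto_const_nhds.sub hωY).sub hωW
    rw [sub_zero] at hTend
    apply hTend.congr'
    filter_upwards [eventually_ge_atTop 1] with n hn
    have hn' : (n : ℝ) ≠ 0 := by positivity
    have : ∑ k ∈ Finset.range n, (Qhat - r (Xs k ω) - W k ω - γ * Vhat (Xs k ω))
        = n * Qhat - (∑ k ∈ Finset.range n, Y k ω) - (∑ k ∈ Finset.range n, W k ω) := by
      simp only [hY, hf, Finset.sum_sub_distrib, Finset.sum_const, Finset.card_range,
        nsmul_eq_mul, Finset.sum_add_distrib]
      ring
    rw [this]
    field_simp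
  have hTabs : Tendsto (fun n : ℕ => |(1 / (n : ℝ)) *
      ∑ k ∈ Finset.range n, (Qhat - r (Xs k ω) - W k ω - γ * Vhat (Xs k ω))|)
      atTop (nhds |L|) := hT.abs
  rw [hTabs.limsup_eq]
  exact hLbound
end

section
/- Let X be a nonempty finite type, p, p̂ : X → ℝ two probability vectors, r, V*, V̂ : X → ℝ, γ ∈ [0,1), and Q̂, Q* ∈ ℝ satisfying the Bellman relation Q* = Σ_{x'} p(x')·(r(x') + γ·V*(x')). On a probability space, let (X_k)_{k≥1} be an i.i.d. sequence of X-valued random variables with ℙ(X_k = x) = p̂(x) for all x (the spoofed transition law), and let (W_k)_{k≥1} be i.i.d. integrable real random variables with mean 0, independent of (X_k). Define d_k = Q̂ − r(X_k) − W_k − γ·V̂(X_k). Then almost surely, (1/n)·Σ_{k=1}^n d_k converges as n → ∞ to Q̂ − Q* + γ·Σ_{x'} p̂(x')·(V*(x') − V̂(x')) + Σ_{x'} (p(x') − p̂(x'))·(r(x') + γ·V*(x')). -/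
open MeasureTheory ProbabilityTheory Filter Finset

/-- **Theorem 3 (under attack):** when observed next states are drawn from the
adversary's model `p̂`, the Bellman deviation process mean converges almost surely to
`Q̂ − Q* + γ·Σ p̂(x')(V*(x') − V̂(x')) + Σ (p(x') − p̂(x'))(r(x') + γ·V*(x'))`. -/
theorem bdpm_limit_attack
    {X : Type*} [Fintype X] [Nonempty X] [MeasurableSpace X] [MeasurableSingletonClass X]
    (p phat : X → ℝ)
    (hp0 : ∀ x, 0 ≤ p x) (hp1 : ∑ x, p x = 1)
    (hphat0 : ∀ x, 0 ≤ phat x) (hphat1 : ∑ x, phat x = 1)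
    (r Vstar Vhat : X → ℝ) (γ : ℝ) (hγ0 : 0 ≤ γ) (hγ1 : γ < 1)
    (Qhat Qstar : ℝ)
    (hBell : Qstar = ∑ x, p x * (r x + γ * Vstar x))
    {Ω : Type*} [MeasurableSpace Ω] (μ : Measure Ω) [IsProbabilityMeasure μ]
    (Xs : ℕ → Ω → X) (W : ℕ → Ω → ℝ)
    (hXmeas : ∀ k, Measurable (Xs k))
    (hWmeas : ∀ k, Measurable (W k))
    -- (X_k) is an i.i.d. sequence following the spoofed transition law p̂
    (hXindep : iIndepFun Xs μ)
    (hXdist : ∀ k x, μ {ω | Xs k ω = x} = ENNReal.ofReal (phat x))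
    -- (W_k) is an i.i.d. sequence of integrable centered random variables
    (hWindep : iIndepFun W μ)
    (hWident : ∀ k, IdentDistrib (W k) (W 0) μ μ)
    (hWint : ∀ k, Integrable (W k) μ)
    (hWmean : ∀ k, ∫ ω, W k ω ∂μ = 0)
    -- the sequence (W_k) is independent of the sequence (X_k)
    (hWXindep : IndepFun (fun ω k => Xs k ω) (fun ω k => W k ω) μ) :
    ∀ᵐ ω ∂μ, Tendsto
      (fun n : ℕ => (1 / (n : ℝ)) *
        ∑ k ∈ Finset.range n, (Qhat - r (Xs k ω) - W k ω - γ * Vhat (Xs k ω)))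
      atTop (nhds (Qhat - Qstar + γ * ∑ x, phat x * (Vstar x - Vhat x)
        + ∑ x, (p x - phat x) * (r x + γ * Vstar x))) := by
  set f : X → ℝ := fun x => Qhat - r x - γ * Vhat x with hf
  have hfm : Measurable f := measurable_of_countable f
  have hmap : ∀ k, μ.map (Xs k) = μ.map (Xs 0) := by
    intro k
    apply MeasureTheory.Measure.ext_of_singleton
    intro x
    rw [Measure.map_apply (hXmeas k) (measurableSet_singleton x),
      Measure.map_apply (hXmeas 0) (measurableSet_singleton x)]
    show μ {ω | Xs k ω = x} = μ {ω | Xs 0 ω = x}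
    rw [hXdist k x, hXdist 0 x]
  have hXident : ∀ k, IdentDistrib (Xs k) (Xs 0) μ μ :=
    fun k => ⟨(hXmeas k).aemeasurable, (hXmeas 0).aemeasurable, hmap k⟩
  have hYident : ∀ k, IdentDistrib (fun ω => f (Xs k ω)) (fun ω => f (Xs 0 ω)) μ μ :=
    fun k => (hXident k).comp hfm
  have hYindep : Pairwise (Function.onFun (IndepFun · · μ) fun k ω => f (Xs k ω)) := by
    intro i j hij
    exact (hXindep.indepFun hij).comp hfm hfm
  haveI : IsProbabilityMeasure (μ.map (Xs 0)) :=
    Measure.isProbabilityMeasure_map (hXmeas 0).aemeasurable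
  have hfint : Integrable f (μ.map (Xs 0)) := Integrable.of_finite
  have hYint0 : Integrable (fun ω => f (Xs 0 ω)) μ :=
    (integrable_map_measure hfm.aestronglyMeasurable (hXmeas 0).aemeasurable).mp hfint
  have hmean : ∫ ω, f (Xs 0 ω) ∂μ = ∑ x, phat x * f x := by
    rw [← integral_map (hXmeas 0).aemeasurable hfm.aestronglyMeasurable,
      integral_fintype hfint]
    apply Finset.sum_congr rfl
    intro x _
    rw [measureReal_def, Measure.map_apply (hXmeas 0) (measurableSet_singleton x)]
    show ((μ {ω | Xs 0 ω = x}).toReal) • f x = _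
    rw [hXdist 0 x, ENNReal.toReal_ofReal (hphat0 x), smul_eq_mul]
  have h1 := strong_law_ae_real (fun k ω => f (Xs k ω)) hYint0 hYindep hYident
  have hWindep' : Pairwise (Function.onFun (IndepFun · · μ) W) := fun i j hij => hWindep.indepFun hij
  have h2 := strong_law_ae_real W (hWint 0) hWindep' hWident
  rw [hmean] at h1
  rw [hWmean 0] at h2
  have hQ : Qhat = ∑ x, phat x * Qhat := by rw [← Finset.sum_mul, hphat1, one_mul]
  have key : ∑ x, phat x * f x
      = Qhat - (∑ x, p x * (r x + γ * Vstar x)) + γ * ∑ x, phat x * (Vstar x - Vhat x)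
        + ∑ x, (p x - phat x) * (r x + γ * Vstar x) := by
    rw [hQ, Finset.mul_sum, ← Finset.sum_sub_distrib, ← Finset.sum_add_distrib,
      ← Finset.sum_add_distrib]
    exact Finset.sum_congr rfl fun x _ => by simp only [hf]; ring
  filter_upwards [h1, h2] with ω h1 h2
  have hlim : Qhat - Qstar + γ * ∑ x, phat x * (Vstar x - Vhat x)
      + ∑ x, (p x - phat x) * (r x + γ * Vstar x) = ∑ x, phat x * f x - 0 := by
    rw [sub_zero, key, hBell]
  rw [hlim]
  apply (h1.sub h2).congr
  intro n
  rw [← sub_div, one_div, inv_mul_eq_div]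
  congr 1
  rw [← Finset.sum_sub_distrib]
  exact Finset.sum_congr rfl fun k _ => by simp only [hf]; ring
end

section
/- Let X be a nonempty finite type, p, p̂ : X → ℝ two probability vectors, r, V*, V̂ : X → ℝ, γ ∈ [0,1), ε, Φ ≥ 0, and Q̂, Q* ∈ ℝ satisfying the Bellman relation Q* = Σ_{x'} p(x')·(r(x') + γ·V*(x')). Assume |Q̂ − Q*| ≤ ε, |V̂(x) − V*(x)| ≤ ε for all x ∈ X, and |Σ_{x'} (p(x') − p̂(x'))·(r(x') + γ·V*(x'))| ≥ Φ. On a probability space, let (X_k)_{k≥1} be i.i.d. X-valued with ℙ(X_k = x) = p̂(x), and (W_k)_{k≥1} i.i.d. integrable real random variables with mean 0, independent of (X_k). Define d_k = Q̂ − r(X_k) − W_k − γ·V̂(X_k). Then almost surely, liminf_{n→∞} |(1/n)·Σ_{k=1}^n d_k| ≥ Φ − (1 + γ)·ε. -/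
open MeasureTheory ProbabilityTheory Filter Finset

/-- **Theorem 4:** under attack, the magnitude of the Bellman deviation process mean
is asymptotically lower-bounded by `Φ − (1+γ)·ε` almost surely. -/
theorem bdpm_liminf_attack
    {X : Type*} [Fintype X] [Nonempty X] [MeasurableSpace X] [MeasurableSingletonClass X]
    (p phat : X → ℝ)
    (hp0 : ∀ x, 0 ≤ p x) (hp1 : ∑ x, p x = 1)
    (hphat0 : ∀ x, 0 ≤ phat x) (hphat1 : ∑ x, phat x = 1)
    (r Vstar Vhat : X → ℝ) (γ : ℝ) (hγ0 : 0 ≤ γ) (hγ1 : γ < 1)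
    (ε Φ : ℝ) (hε : 0 ≤ ε) (hΦ : 0 ≤ Φ)
    (Qhat Qstar : ℝ)
    (hBell : Qstar = ∑ x, p x * (r x + γ * Vstar x))
    (hQ : |Qhat - Qstar| ≤ ε)
    (hV : ∀ x, |Vhat x - Vstar x| ≤ ε)
    (hdrift : |∑ x, (p x - phat x) * (r x + γ * Vstar x)| ≥ Φ)
    {Ω : Type*} [MeasurableSpace Ω] (μ : Measure Ω) [IsProbabilityMeasure μ]
    (Xs : ℕ → Ω → X) (W : ℕ → Ω → ℝ)
    (hXmeas : ∀ k, Measurable (Xs k))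
    (hWmeas : ∀ k, Measurable (W k))
    -- (X_k) is an i.i.d. sequence following the spoofed transition law p̂
    (hXindep : iIndepFun Xs μ)
    (hXdist : ∀ k x, μ {ω | Xs k ω = x} = ENNReal.ofReal (phat x))
    -- (W_k) is an i.i.d. sequence of integrable centered random variables
    (hWindep : iIndepFun W μ)
    (hWident : ∀ k, IdentDistrib (W k) (W 0) μ μ)
    (hWint : ∀ k, Integrable (W k) μ)
    (hWmean : ∀ k, ∫ ω, W k ω ∂μ = 0)
    -- the sequence (W_k) is independent of the sequence (X_k)
    (hWXindep : IndepFun (fun ω k => Xs k ω) (fun ω k => W k ω) μ) :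
    ∀ᵐ ω ∂μ, Φ - (1 + γ) * ε ≤ Filter.liminf
      (fun n : ℕ => |(1 / (n : ℝ)) *
        ∑ k ∈ Finset.range n, (Qhat - r (Xs k ω) - W k ω - γ * Vhat (Xs k ω))|)
      atTop := by

  classical
  set f : X → ℝ := fun x => r x + γ * Vhat x with hf
  have hfm : Measurable f := measurable_of_countable f
  set m : ℝ := ∑ x, phat x * f x with hm_def
  -- the Y sequence
  set Y : ℕ → Ω → ℝ := fun k ω => f (Xs k ω) with hY
  have hYmeas : ∀ k, Measurable (Y k) := fun k => hfm.comp (hXmeas k)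
  -- boundedness of f
  set C : ℝ := ∑ x, |f x| with hC
  have hfb : ∀ x, ‖f x‖ ≤ C := fun x => by
    simpa using Finset.single_le_sum (f := fun x => |f x|)
      (fun y _ => abs_nonneg _) (Finset.mem_univ x)
  -- identical distribution of the Xs
  have hmap : ∀ k, Measure.map (Xs k) μ = Measure.map (Xs 0) μ := by
    intro k
    rw [MeasureTheory.Measure.ext_iff_singleton]
    intro x
    rw [Measure.map_apply (hXmeas k) (measurableSet_singleton x),
      Measure.map_apply (hXmeas 0) (measurableSet_singleton x)]
    have h1 : Xs k ⁻¹' {x} = {ω | Xs k ω = x} := rfl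
    have h2 : Xs 0 ⁻¹' {x} = {ω | Xs 0 ω = x} := rfl
    rw [h1, h2, hXdist k x, hXdist 0 x]
  have hXident : ∀ k, IdentDistrib (Xs k) (Xs 0) μ μ := fun k =>
    ⟨(hXmeas k).aemeasurable, (hXmeas 0).aemeasurable, hmap k⟩
  have hYident : ∀ k, IdentDistrib (Y k) (Y 0) μ μ := fun k =>
    (hXident k).comp hfm
  have hYindep : Pairwise (Function.onFun (IndepFun · · μ) Y) := fun i j hij =>
    (hXindep.indepFun hij).comp hfm hfm
  have hYint : Integrable (Y 0) μ :=
    ⟨(hYmeas 0).aestronglyMeasurable,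
      HasFiniteIntegral.of_bounded (ae_of_all μ (fun ω => hfb (Xs 0 ω)))⟩
  -- compute the mean of Y 0
  have hmean : ∫ ω, Y 0 ω ∂μ = m := by
    have hmapP : IsProbabilityMeasure (Measure.map (Xs 0) μ) :=
      Measure.isProbabilityMeasure_map (hXmeas 0).aemeasurable
    have hint2 : Integrable f (Measure.map (Xs 0) μ) :=
      ⟨hfm.aestronglyMeasurable,
        HasFiniteIntegral.of_bounded (ae_of_all _ (fun x => hfb x))⟩
    have := integral_map (hXmeas 0).aemeasurable hfm.aestronglyMeasurable (f := f) (μ := μ)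
    rw [show (∫ ω, Y 0 ω ∂μ) = ∫ ω, f (Xs 0 ω) ∂μ from rfl, ← this,
      integral_fintype hint2]
    apply Finset.sum_congr rfl
    intro x _
    rw [Measure.real, Measure.map_apply (hXmeas 0) (measurableSet_singleton x)]
    have h1 : Xs 0 ⁻¹' {x} = {ω | Xs 0 ω = x} := rfl
    rw [h1, hXdist 0 x, ENNReal.toReal_ofReal (hphat0 x)]
    simp [smul_eq_mul]
  -- strong laws
  have slY := strong_law_ae_real Y hYint hYindep hYident
  have hWindep' : Pairwise (Function.onFun (IndepFun · · μ) W) := fun i j hij =>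
    hWindep.indepFun hij
  have slW := strong_law_ae_real W (hWint 0) hWindep' hWident
  rw [hmean] at slY
  rw [hWmean 0] at slW
  -- the drift quantities
  set D : ℝ := ∑ x, (p x - phat x) * (r x + γ * Vstar x) with hD
  set E : ℝ := ∑ x, phat x * (Vhat x - Vstar x) with hE
  have hmid : m = Qstar - D + γ * E := by
    rw [hBell, hD, hE, hm_def, Finset.mul_sum, ← Finset.sum_sub_distrib,
      ← Finset.sum_add_distrib]
    exact Finset.sum_congr rfl fun x _ => by simp only [hf]; ring
  have hEbound : |E| ≤ ε := by
    calc |E| ≤ ∑ x, |phat x * (Vhat x - Vstar x)| := Finset.abs_sum_le_sum_abs _ _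
    _ ≤ ∑ x, phat x * ε := by
        apply Finset.sum_le_sum
        intro x _
        rw [abs_mul, abs_of_nonneg (hphat0 x)]
        exact mul_le_mul_of_nonneg_left (hV x) (hphat0 x)
    _ = ε := by rw [← Finset.sum_mul, hphat1, one_mul]
  have hlim : Φ - (1 + γ) * ε ≤ |Qhat - m| := by
    have hDd : D = (Qhat - m) - (Qhat - Qstar) + γ * E := by
      rw [hmid]; ring
    have h1 : |D| ≤ |Qhat - m| + |Qhat - Qstar| + γ * |E| := by
      rw [hDd]
      calc |(Qhat - m) - (Qhat - Qstar) + γ * E|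
          ≤ |(Qhat - m) - (Qhat - Qstar)| + |γ * E| := abs_add_le _ _
        _ ≤ (|Qhat - m| + |Qhat - Qstar|) + γ * |E| := by
            rw [abs_mul, abs_of_nonneg hγ0]
            exact add_le_add_left (abs_sub _ _) _
    have h2 : γ * |E| ≤ γ * ε := mul_le_mul_of_nonneg_left hEbound hγ0
    nlinarith [hdrift, hQ]
  -- combine
  filter_upwards [slY, slW] with ω hYω hWω
  have htend : Tendsto (fun n : ℕ => (1 / (n : ℝ)) *
      ∑ k ∈ Finset.range n, (Qhat - r (Xs k ω) - W k ω - γ * Vhat (Xs k ω)))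
      atTop (nhds (Qhat - m - 0)) := by
    apply Tendsto.congr' _ ((tendsto_const_nhds.sub hYω).sub hWω)
    filter_upwards [eventually_ge_atTop 1] with n hn
    have hn0 : (n : ℝ) ≠ 0 := by positivity
    have h1 : ∀ k, Qhat - r (Xs k ω) - W k ω - γ * Vhat (Xs k ω)
        = Qhat - Y k ω - W k ω := fun k => by simp only [hY, hf]; ring
    rw [Finset.sum_congr rfl (fun k _ => h1 k), Finset.sum_sub_distrib,
      Finset.sum_sub_distrib, Finset.sum_const, Finset.card_range, nsmul_eq_mul]
    field_simp
  have habs := htend.abs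
  rw [sub_zero] at habs
  rw [habs.liminf_eq]
  exact hlim
end

section
/- Let X be a nonempty finite type, p, p̂ : X → ℝ two probability vectors, r, V*, V̂ : X → ℝ, γ ∈ [0,1), Q̂, Q* ∈ ℝ, and ε, ε̄, Φ ≥ 0 with ε ≤ ε̄. Assume |Q̂ − Q*| ≤ ε, |V̂(x) − V*(x)| ≤ ε for all x ∈ X, |Σ_{x'} (p(x') − p̂(x'))·(r(x') + γ·V*(x'))| ≥ Φ, and the information advantage condition Φ > 2·(1 + γ)·ε̄. Then the secure-case deviation limit satisfies |Q̂ − Q* + γ·Σ_{x'} p(x')·(V*(x') − V̂(x'))| ≤ (1 + γ)·ε̄, while the attack-case deviation limit satisfies |Q̂ − Q* + γ·Σ_{x'} p̂(x')·(V*(x') − V̂(x')) + Σ_{x'} (p(x') − p̂(x'))·(r(x') + γ·V*(x'))| > (1 + γ)·ε̄; in particular the two limits are strictly separated by the threshold (1 + γ)·ε̄. -/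
/-!
Both deviation limits contain the estimation error `Q̂ - Q* + γ·E_q[V* - V̂]` for a probability
vector `q`, and averaging against `q` cannot enlarge the pointwise bound `ε`, so this error is at
most `(1 + γ)·ε ≤ (1 + γ)·ε̄`. The attack limit adds the value drift, of size more than
`2·(1 + γ)·ε̄`; by the reverse triangle inequality more than `(1 + γ)·ε̄` survives.
-/

open Finset

lemma abs_sum_mul_le_of_abs_le {ι : Type*} [Fintype ι] {q f : ι → ℝ} {c : ℝ}
    (hq0 : ∀ i, 0 ≤ q i) (hq1 : ∑ i, q i = 1) (hf : ∀ i, |f i| ≤ c) :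
    |∑ i, q i * f i| ≤ c :=
  calc |∑ i, q i * f i| ≤ ∑ i, |q i * f i| := abs_sum_le_sum_abs _ _
    _ ≤ ∑ i, q i * c := by
        gcongr with i
        rw [abs_mul, abs_of_nonneg (hq0 i)]
        exact mul_le_mul_of_nonneg_left (hf i) (hq0 i)
    _ = c := by rw [← sum_mul, hq1, one_mul]

lemma abs_deviation_le {X : Type*} [Fintype X] {q Vstar Vhat : X → ℝ} {γ Qhat Qstar ε : ℝ}
    (hq0 : ∀ x, 0 ≤ q x) (hq1 : ∑ x, q x = 1) (hγ0 : 0 ≤ γ)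
    (hQ : |Qhat - Qstar| ≤ ε) (hV : ∀ x, |Vhat x - Vstar x| ≤ ε) :
    |Qhat - Qstar + γ * ∑ x, q x * (Vstar x - Vhat x)| ≤ (1 + γ) * ε := by
  have hmean : |∑ x, q x * (Vstar x - Vhat x)| ≤ ε :=
    abs_sum_mul_le_of_abs_le hq0 hq1 fun x => abs_sub_comm (Vstar x) (Vhat x) ▸ hV x
  calc |Qhat - Qstar + γ * ∑ x, q x * (Vstar x - Vhat x)|
      ≤ |Qhat - Qstar| + γ * |∑ x, q x * (Vstar x - Vhat x)| := by
        rw [← abs_of_nonneg hγ0, ← abs_mul, abs_of_nonneg hγ0]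
        exact abs_add_le _ _
    _ ≤ ε + γ * ε := by gcongr
    _ = (1 + γ) * ε := by ring

lemma lt_abs_add_of_abs_le {a d t : ℝ} (ha : |a| ≤ t) (hd : 2 * t < |d|) : t < |a + d| := by
  have := abs_sub_abs_le_abs_sub d (-a)
  rw [abs_neg, sub_neg_eq_add, add_comm] at this
  linarith

theorem information_advantage_separation_general
    {X : Type*} [Fintype X]
    (p phat : X → ℝ)
    (hp0 : ∀ x, 0 ≤ p x) (hp1 : ∑ x, p x = 1)
    (hphat0 : ∀ x, 0 ≤ phat x) (hphat1 : ∑ x, phat x = 1)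
    (r Vstar Vhat : X → ℝ) (γ : ℝ) (hγ0 : 0 ≤ γ)
    (Qhat Qstar : ℝ) (ε εbar Φ : ℝ)
    (hεle : ε ≤ εbar)
    (hQ : |Qhat - Qstar| ≤ ε)
    (hV : ∀ x, |Vhat x - Vstar x| ≤ ε)
    (hdrift : |∑ x, (p x - phat x) * (r x + γ * Vstar x)| ≥ Φ)
    (hInfoAdv : Φ > 2 * (1 + γ) * εbar) :
    |Qhat - Qstar + γ * ∑ x, p x * (Vstar x - Vhat x)| ≤ (1 + γ) * εbar ∧
    |Qhat - Qstar + γ * ∑ x, phat x * (Vstar x - Vhat x)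
        + ∑ x, (p x - phat x) * (r x + γ * Vstar x)| > (1 + γ) * εbar := by
  have hdev : ∀ q : X → ℝ, (∀ x, 0 ≤ q x) → ∑ x, q x = 1 →
      |Qhat - Qstar + γ * ∑ x, q x * (Vstar x - Vhat x)| ≤ (1 + γ) * εbar :=
    fun q hq0 hq1 => (abs_deviation_le hq0 hq1 hγ0 hQ hV).trans (by gcongr)
  refine ⟨hdev p hp0 hp1, lt_abs_add_of_abs_le (hdev phat hphat0 hphat1) ?_⟩
  linarith

/-- **Theorem 5 (sufficiency):** under the information advantage condition
`Φ > 2·(1+γ)·ε̄`, the secure-case deviation limit lies at or below the threshold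
`(1+γ)·ε̄`, while the attack-case deviation limit lies strictly above it. -/
theorem information_advantage_separation
    {X : Type*} [Fintype X] [Nonempty X]
    (p phat : X → ℝ)
    (hp0 : ∀ x, 0 ≤ p x) (hp1 : ∑ x, p x = 1)
    (hphat0 : ∀ x, 0 ≤ phat x) (hphat1 : ∑ x, phat x = 1)
    (r Vstar Vhat : X → ℝ) (γ : ℝ) (hγ0 : 0 ≤ γ) (hγ1 : γ < 1)
    (Qhat Qstar : ℝ) (ε εbar Φ : ℝ)
    (hε : 0 ≤ ε) (hεbar : 0 ≤ εbar) (hΦ : 0 ≤ Φ) (hεle : ε ≤ εbar)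
    (hQ : |Qhat - Qstar| ≤ ε)
    (hV : ∀ x, |Vhat x - Vstar x| ≤ ε)
    (hdrift : |∑ x, (p x - phat x) * (r x + γ * Vstar x)| ≥ Φ)
    (hInfoAdv : Φ > 2 * (1 + γ) * εbar) :
    |Qhat - Qstar + γ * ∑ x, p x * (Vstar x - Vhat x)| ≤ (1 + γ) * εbar ∧
    |Qhat - Qstar + γ * ∑ x, phat x * (Vstar x - Vhat x)
        + ∑ x, (p x - phat x) * (r x + γ * Vstar x)| > (1 + γ) * εbar :=
  information_advantage_separation_general p phat hp0 hp1 hphat0 hphat1 r Vstar Vhat γ hγ0 Qhat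
    Qstar ε εbar Φ hεle hQ hV hdrift hInfoAdv
end

section
/- Let X be a nonempty finite type, n ≥ 1 a natural number, and c : X → ℝ. For a probability vector q on X, let q^{⊗n} denote the law of n i.i.d. samples from q, i.e., the product probability measure on Fin n → X in which each coordinate has distribution q. Define the empirical estimator T₀ : (Fin n → X) → ℝ by T₀(x) = (1/n)·Σ_{i=1}^n c(x_i). Then for every probability vector p on X and every function T : (Fin n → X) → ℝ that is unbiased for the linear functional, i.e., E_{q^{⊗n}}[T] = Σ_x q(x)·c(x) for every probability vector q on X, we have E_{p^{⊗n}}[(T − Σ_x p(x)·c(x))²] ≥ E_{p^{⊗n}}[(T₀ − Σ_x p(x)·c(x))²]. -/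
open MeasureTheory Finset

/-- The probability measure on a finite type induced by a probability vector `q`. -/
noncomputable def probVecMeasure {X : Type*} [Fintype X] [MeasurableSpace X]
    (q : X → ℝ) : Measure X :=
  ∑ x : X, (ENNReal.ofReal (q x)) • Measure.dirac x

namespace EmpMVUEAux

lemma derivative_finset_prod {ι : Type*} [DecidableEq ι] (s : Finset ι) (f : ι → Polynomial ℝ) :
    Polynomial.derivative (∏ i ∈ s, f i)
      = ∑ i ∈ s, (∏ j ∈ s.erase i, f j) * Polynomial.derivative (f i) := by
  induction s using Finset.induction_on with
  | empty => simp
  | @insert a s ha ih =>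
    rw [Finset.prod_insert ha, Polynomial.derivative_mul, ih, Finset.sum_insert ha,
        Finset.erase_insert ha, Finset.mul_sum]
    congr 1
    · ring
    · refine Finset.sum_congr rfl fun i hi => ?_
      rw [Finset.erase_insert_of_ne (by rintro rfl; exact ha hi), Finset.prod_insert
        (fun h => ha (Finset.mem_of_mem_erase h))]
      ring

variable {X : Type*} [Fintype X]

section Meas
variable [MeasurableSpace X] [MeasurableSingletonClass X]

lemma probVecMeasure_apply (q : X → ℝ) (s : Set X) :
    probVecMeasure q s = ∑ x : X, ENNReal.ofReal (q x) * s.indicator 1 x := by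
  simp [probVecMeasure, Measure.finset_sum_apply, Measure.dirac_apply]

lemma probVecMeasure_singleton (q : X → ℝ) (x : X) :
    probVecMeasure q {x} = ENNReal.ofReal (q x) := by
  classical
  rw [probVecMeasure_apply]
  rw [Finset.sum_eq_single x]
  · simp
  · intro y _ hy
    simp [Set.indicator_of_notMem, hy]
  · simp

instance (q : X → ℝ) : IsFiniteMeasure (probVecMeasure q) := by
  constructor
  rw [probVecMeasure_apply]
  exact ENNReal.sum_lt_top.mpr fun x _ => by
    calc ENNReal.ofReal (q x) * Set.indicator Set.univ 1 x ≤ ENNReal.ofReal (q x) * 1 := by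
          gcongr; simp [Set.indicator]
      _ < ⊤ := by simp [ENNReal.ofReal_lt_top]

instance instMSC (n : ℕ) : MeasurableSingletonClass (Fin n → X) :=
  ⟨fun xs => by
    rw [← Set.univ_pi_singleton]
    exact MeasurableSet.univ_pi fun i => measurableSet_singleton _⟩

lemma integral_pi_probVec (n : ℕ) (p : X → ℝ) (hp0 : ∀ x, 0 ≤ p x)
    (f : (Fin n → X) → ℝ) :
    ∫ xs, f xs ∂(Measure.pi fun _ : Fin n => probVecMeasure p)
      = ∑ xs : Fin n → X, (∏ i, p (xs i)) * f xs := by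
  rw [integral_fintype (Integrable.of_finite)]
  refine Finset.sum_congr rfl fun xs _ => ?_
  have h1 : (Measure.pi fun _ : Fin n => probVecMeasure p) {xs}
      = ∏ i, ENNReal.ofReal (p (xs i)) := by
    rw [← Set.univ_pi_singleton, Measure.pi_pi]
    exact Finset.prod_congr rfl fun i _ => probVecMeasure_singleton p (xs i)
  rw [Measure.real_def, h1, smul_eq_mul, ENNReal.toReal_prod]
  congr 1
  exact Finset.prod_congr rfl fun i _ => ENNReal.toReal_ofReal (hp0 _)

end Meas

lemma sum_prod_fn (n : ℕ) (g : Fin n → X → ℝ) :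
    ∑ xs : Fin n → X, ∏ i, g i (xs i) = ∏ i, ∑ x, g i x := by
  classical
  rw [Finset.prod_univ_sum]
  exact Finset.sum_congr (by rw [Fintype.piFinset_univ]) fun _ _ => rfl

lemma sum_coord_prod (n : ℕ) (q b : X → ℝ) (i : Fin n) :
    ∑ xs : Fin n → X, b (xs i) * ∏ j, q (xs j)
      = (∑ x, b x * q x) * (∑ x, q x) ^ (n - 1) := by
  classical
  have key : ∀ xs : Fin n → X, b (xs i) * ∏ j, q (xs j)
      = ∏ j, (fun j x => if j = i then b x * q x else q x) j (xs j) := by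
    intro xs
    rw [← Finset.mul_prod_erase univ
      (fun j => (fun j x => if j = i then b x * q x else q x) j (xs j)) (mem_univ i)]
    simp only [if_pos rfl]
    rw [Finset.prod_congr rfl (fun j hj => if_neg (Finset.mem_erase.mp hj).1),
        ← Finset.mul_prod_erase univ (fun j => q (xs j)) (mem_univ i)]
    rw [if_pos trivial]
    ring
  calc ∑ xs : Fin n → X, b (xs i) * ∏ j, q (xs j)
      = ∑ xs : Fin n → X, ∏ j, (fun j x => if j = i then b x * q x else q x) j (xs j) :=
        Finset.sum_congr rfl fun xs _ => key xs
    _ = ∏ j, ∑ x, (fun j x => if j = i then b x * q x else q x) j x :=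
        sum_prod_fn n (fun j x => if j = i then b x * q x else q x)
    _ = ∏ j, (if j = i then ∑ x, b x * q x else ∑ x, q x) := by
        refine Finset.prod_congr rfl fun j _ => ?_
        by_cases h : j = i <;> simp [h]
    _ = (∑ x, b x * q x) * (∑ x, q x) ^ (n - 1) := by
        rw [← Finset.mul_prod_erase univ _ (mem_univ i), if_pos rfl,
            Finset.prod_congr rfl (fun j hj => if_neg (Finset.mem_erase.mp hj).1),
            Finset.prod_const, Finset.card_erase_of_mem (mem_univ i), card_univ,
            Fintype.card_fin]

lemma T0_unbiased (n : ℕ) (hn : 1 ≤ n) (c q : X → ℝ) (hq1 : ∑ x, q x = 1) :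
    ∑ xs : Fin n → X, (∏ j, q (xs j)) * ((1 / (n : ℝ)) * ∑ i, c (xs i))
      = ∑ x, q x * c x := by
  classical
  have hn0 : (n : ℝ) ≠ 0 := Nat.cast_ne_zero.mpr (by omega)
  have key : ∀ xs : Fin n → X, (∏ j, q (xs j)) * ((1 / (n : ℝ)) * ∑ i, c (xs i))
      = ∑ i, (1 / (n : ℝ)) * (c (xs i) * ∏ j, q (xs j)) := by
    intro xs
    rw [Finset.mul_sum, Finset.mul_sum]
    exact Finset.sum_congr rfl fun i _ => by ring
  rw [Finset.sum_congr rfl fun xs _ => key xs, Finset.sum_comm]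
  have h2 : ∀ i : Fin n, ∑ xs : Fin n → X, (1 / (n : ℝ)) * (c (xs i) * ∏ j, q (xs j))
      = (1 / (n : ℝ)) * ∑ x, q x * c x := by
    intro i
    rw [← Finset.mul_sum, sum_coord_prod n q c i, hq1, one_pow, mul_one]
    congr 1
    exact Finset.sum_congr rfl fun x _ => mul_comm _ _
  rw [Finset.sum_congr rfl fun i _ => h2 i, Finset.sum_const, card_univ, Fintype.card_fin,
      nsmul_eq_mul]
  field_simp

lemma F_zero (n : ℕ) (hn : 1 ≤ n) (U : (Fin n → X) → ℝ)
    (hU : ∀ q : X → ℝ, (∀ x, 0 ≤ q x) → ∑ x, q x = 1 →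
      ∑ xs : Fin n → X, (∏ j, q (xs j)) * U xs = 0)
    (q : X → ℝ) (hq0 : ∀ x, 0 ≤ q x) :
    ∑ xs : Fin n → X, (∏ j, q (xs j)) * U xs = 0 := by
  classical
  rcases eq_or_lt_of_le (Finset.sum_nonneg fun x (_ : x ∈ univ) => hq0 x) with hs | hs
  · have hz : ∀ x, q x = 0 := fun x =>
      (Finset.sum_eq_zero_iff_of_nonneg (fun x _ => hq0 x)).mp hs.symm x (mem_univ x)
    refine Finset.sum_eq_zero fun xs _ => ?_
    rw [Finset.prod_eq_zero (mem_univ (⟨0, hn⟩ : Fin n)) (hz _), zero_mul]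
  · set s : ℝ := ∑ x, q x with hsdef
    have hs0 : s ≠ 0 := ne_of_gt hs
    have h1 := hU (fun x => q x / s) (fun x => div_nonneg (hq0 x) hs.le)
      (by rw [← Finset.sum_div]; exact div_self hs0)
    simp only [Finset.prod_div_distrib, Finset.prod_const, card_univ, Fintype.card_fin] at h1
    have h3 : ∑ xs : Fin n → X, (∏ j, q (xs j)) * U xs
        = s ^ n * ∑ xs : Fin n → X, ((∏ j, q (xs j)) / s ^ n) * U xs := by
      rw [Finset.mul_sum]
      refine Finset.sum_congr rfl fun xs _ => ?_
      field_simp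
    rw [h3, h1, mul_zero]

lemma deriv_zero [DecidableEq X] (n : ℕ) (p : X → ℝ) (hp0 : ∀ x, 0 ≤ p x)
    (U : (Fin n → X) → ℝ)
    (hF : ∀ q : X → ℝ, (∀ x, 0 ≤ q x) → ∑ xs : Fin n → X, (∏ j, q (xs j)) * U xs = 0)
    (y : X) :
    ∑ xs : Fin n → X, U xs *
      ∑ i, (if xs i = y then ∏ j ∈ univ.erase i, p (xs j) else 0) = 0 := by
  classical
  set P : Polynomial ℝ := ∑ xs : Fin n → X, Polynomial.C (U xs) *
      ∏ j, (Polynomial.C (p (xs j)) + if xs j = y then Polynomial.X else 0) with hP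
  have heval : ∀ t : ℝ, P.eval t
      = ∑ xs : Fin n → X, (∏ j, (p (xs j) + if xs j = y then t else 0)) * U xs := by
    intro t
    rw [hP, Polynomial.eval_finset_sum]
    refine Finset.sum_congr rfl fun xs _ => ?_
    rw [Polynomial.eval_mul, Polynomial.eval_C, Polynomial.eval_prod, mul_comm]
    congr 1
    refine Finset.prod_congr rfl fun j _ => ?_
    by_cases h : xs j = y <;> simp [h]
  have hroot : ∀ t : ℝ, 0 ≤ t → P.IsRoot t := by
    intro t ht
    have h1 := hF (fun x => p x + if x = y then t else 0)
      (fun x => add_nonneg (hp0 x) (by split <;> simp [ht]))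
    rw [Polynomial.IsRoot, heval]
    simpa using h1
  have hP0 : P = 0 :=
    Polynomial.eq_zero_of_infinite_isRoot P
      ((Set.Ici_infinite (0:ℝ)).mono fun t ht => hroot t ht)
  have hD : Polynomial.eval 0 (Polynomial.derivative P) = 0 := by rw [hP0]; simp
  rw [hP] at hD
  rw [map_sum] at hD
  simp only [Polynomial.derivative_C_mul, derivative_finset_prod] at hD
  simp only [Polynomial.derivative_add, Polynomial.derivative_C, zero_add,
    apply_ite Polynomial.derivative, Polynomial.derivative_X, Polynomial.derivative_zero] at hD
  simp only [Polynomial.eval_finset_sum, Polynomial.eval_mul, Polynomial.eval_C,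
    Polynomial.eval_add, Polynomial.eval_prod, apply_ite (Polynomial.eval (0:ℝ)),
    Polynomial.eval_X, Polynomial.eval_zero, Polynomial.eval_one, ite_self, add_zero,
    mul_ite, mul_one, mul_zero] at hD
  exact hD

lemma cross_zero [DecidableEq X] (n : ℕ) (p c : X → ℝ)
    (U : (Fin n → X) → ℝ)
    (hD : ∀ y : X, ∑ xs : Fin n → X, U xs *
      ∑ i, (if xs i = y then ∏ j ∈ univ.erase i, p (xs j) else 0) = 0) :
    ∑ xs : Fin n → X, (∏ j, p (xs j)) * (U xs * ∑ i, c (xs i)) = 0 := by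
  classical
  have step1 : ∀ i : Fin n, ∀ xs : Fin n → X,
      (∏ j, p (xs j)) * (U xs * c (xs i))
        = ∑ y : X, (c y * p y) *
            (U xs * (if xs i = y then ∏ j ∈ univ.erase i, p (xs j) else 0)) := by
    intro i xs
    have : ∀ y : X, (c y * p y) * (U xs * (if xs i = y then ∏ j ∈ univ.erase i, p (xs j) else 0))
        = if xs i = y then (c y * p y) * (U xs * ∏ j ∈ univ.erase i, p (xs j)) else 0 := by
      intro y; by_cases h : xs i = y <;> simp [h]
    rw [Finset.sum_congr rfl fun y _ => this y, Finset.sum_ite_eq univ (xs i) _,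
        if_pos (mem_univ _), ← Finset.mul_prod_erase univ (fun j => p (xs j)) (mem_univ i)]
    ring
  calc ∑ xs : Fin n → X, (∏ j, p (xs j)) * (U xs * ∑ i, c (xs i))
      = ∑ xs : Fin n → X, ∑ i : Fin n, (∏ j, p (xs j)) * (U xs * c (xs i)) := by
        refine Finset.sum_congr rfl fun xs _ => ?_
        rw [Finset.mul_sum, Finset.mul_sum]
    _ = ∑ i : Fin n, ∑ xs : Fin n → X, (∏ j, p (xs j)) * (U xs * c (xs i)) := Finset.sum_comm
    _ = ∑ i : Fin n, ∑ xs : Fin n → X, ∑ y : X,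
          (c y * p y) * (U xs * (if xs i = y then ∏ j ∈ univ.erase i, p (xs j) else 0)) :=
        Finset.sum_congr rfl fun i _ => Finset.sum_congr rfl fun xs _ => step1 i xs
    _ = ∑ xs : Fin n → X, ∑ i : Fin n, ∑ y : X,
          (c y * p y) * (U xs * (if xs i = y then ∏ j ∈ univ.erase i, p (xs j) else 0)) :=
        Finset.sum_comm
    _ = ∑ xs : Fin n → X, ∑ y : X, ∑ i : Fin n,
          (c y * p y) * (U xs * (if xs i = y then ∏ j ∈ univ.erase i, p (xs j) else 0)) :=
        Finset.sum_congr rfl fun xs _ => Finset.sum_comm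
    _ = ∑ y : X, ∑ xs : Fin n → X, ∑ i : Fin n,
          (c y * p y) * (U xs * (if xs i = y then ∏ j ∈ univ.erase i, p (xs j) else 0)) :=
        Finset.sum_comm
    _ = ∑ y : X, (c y * p y) * ∑ xs : Fin n → X, U xs *
          ∑ i : Fin n, (if xs i = y then ∏ j ∈ univ.erase i, p (xs j) else 0) := by
        refine Finset.sum_congr rfl fun y _ => ?_
        rw [Finset.mul_sum]
        refine Finset.sum_congr rfl fun xs _ => ?_
        rw [Finset.mul_sum, Finset.mul_sum]
    _ = 0 := by
        rw [Finset.sum_congr rfl fun y (_ : y ∈ univ) => by rw [hD y]]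
        simp

end EmpMVUEAux

open EmpMVUEAux

/-- **Theorem 6:** the empirical (sample-distribution) estimator
`T₀(x) = (1/n)·Σᵢ c(xᵢ)` is a minimum-variance unbiased estimator of the linear
functional `Σ_x p(x)·c(x)` of a categorical distribution. -/
theorem empirical_estimator_MVUE
    {X : Type*} [Fintype X] [Nonempty X] [MeasurableSpace X] [MeasurableSingletonClass X]
    (n : ℕ) (hn : 1 ≤ n) (c : X → ℝ)
    (p : X → ℝ) (hp0 : ∀ x, 0 ≤ p x) (hp1 : ∑ x, p x = 1)
    (T : (Fin n → X) → ℝ)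
    -- T is unbiased for the linear functional, for every probability vector q
    (hT : ∀ q : X → ℝ, (∀ x, 0 ≤ q x) → ∑ x, q x = 1 →
      ∫ xs, T xs ∂(Measure.pi fun _ : Fin n => probVecMeasure q) = ∑ x, q x * c x) :
    ∫ xs, (T xs - ∑ x, p x * c x) ^ 2 ∂(Measure.pi fun _ : Fin n => probVecMeasure p)
      ≥ ∫ xs, ((1 / (n : ℝ)) * (∑ i, c (xs i)) - ∑ x, p x * c x) ^ 2
          ∂(Measure.pi fun _ : Fin n => probVecMeasure p) := by
  classical
  rw [integral_pi_probVec n p hp0, integral_pi_probVec n p hp0]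
  set m : ℝ := ∑ x, p x * c x with hm
  set U : (Fin n → X) → ℝ := fun xs => T xs - (1 / (n : ℝ)) * ∑ i, c (xs i) with hUdef
  have hUq : ∀ q : X → ℝ, (∀ x, 0 ≤ q x) → ∑ x, q x = 1 →
      ∑ xs : Fin n → X, (∏ j, q (xs j)) * U xs = 0 := by
    intro q hq0 hq1
    have h1 : ∑ xs : Fin n → X, (∏ j, q (xs j)) * T xs = ∑ x, q x * c x := by
      rw [← integral_pi_probVec n q hq0]; exact hT q hq0 hq1
    have h2 := T0_unbiased n hn c q hq1
    calc ∑ xs : Fin n → X, (∏ j, q (xs j)) * U xs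
        = ∑ xs : Fin n → X, ((∏ j, q (xs j)) * T xs
            - (∏ j, q (xs j)) * ((1 / (n : ℝ)) * ∑ i, c (xs i))) :=
          Finset.sum_congr rfl fun xs _ => by rw [hUdef]; ring
      _ = (∑ xs : Fin n → X, (∏ j, q (xs j)) * T xs)
            - ∑ xs : Fin n → X, (∏ j, q (xs j)) * ((1 / (n : ℝ)) * ∑ i, c (xs i)) :=
          Finset.sum_sub_distrib _ _
      _ = 0 := by rw [h1, h2, sub_self]
  have hF := F_zero n hn U hUq
  have hD := deriv_zero n p hp0 U (fun q hq0 => hF q hq0)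
  have hcross := cross_zero n p c U hD
  have hUp : ∑ xs : Fin n → X, (∏ j, p (xs j)) * U xs = 0 := hF p hp0
  have hsq : 0 ≤ ∑ xs : Fin n → X, (∏ j, p (xs j)) * (U xs) ^ 2 :=
    Finset.sum_nonneg fun xs _ =>
      mul_nonneg (Finset.prod_nonneg fun j _ => hp0 _) (sq_nonneg _)
  have hkey : (∑ xs : Fin n → X, (∏ j, p (xs j)) * (T xs - m) ^ 2)
      - (∑ xs : Fin n → X, (∏ j, p (xs j)) * ((1 / (n : ℝ)) * (∑ i, c (xs i)) - m) ^ 2)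
      = (∑ xs : Fin n → X, (∏ j, p (xs j)) * (U xs) ^ 2)
        + ((2 * (1 / (n : ℝ))) *
            (∑ xs : Fin n → X, (∏ j, p (xs j)) * (U xs * ∑ i, c (xs i)))
          - (2 * m) * ∑ xs : Fin n → X, (∏ j, p (xs j)) * U xs) := by
    rw [Finset.mul_sum, Finset.mul_sum, ← Finset.sum_sub_distrib, ← Finset.sum_sub_distrib,
        ← Finset.sum_add_distrib]
    exact Finset.sum_congr rfl fun xs _ => by rw [hUdef]; ring
  rw [ge_iff_le, ← sub_nonneg, hkey, hcross, hUp]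
  simpa using hsq
end

section
/- Let X be a nonempty finite type, p, p̂ : X → ℝ two probability vectors, r, V*, V̂ : X → ℝ, γ ∈ [0,1), Q̂, Q* ∈ ℝ, ν ∈ [0,1], and ε, ε̄, Φ ≥ 0 with ε ≤ ε̄. Assume |Q̂ − Q*| ≤ ε, |V̂(x) − V*(x)| ≤ ε for all x ∈ X, |Σ_{x'} (p(x') − p̂(x'))·(r(x') + γ·V*(x'))| ≥ Φ, and the modified information advantage condition ν·Φ > 2·(1 + γ)·ε̄. Then the dynamic-attack deviation limit satisfies |Q̂ − Q* + γ·Σ_{x'} p(x')·(V*(x') − V̂(x')) + ν·Σ_{x'} (p(x') − p̂(x'))·(r(x') + γ·V*(x'))| > (1 + γ)·ε̄, while the secure-case limit satisfies |Q̂ − Q* + γ·Σ_{x'} p(x')·(V*(x') − V̂(x'))| ≤ (1 + γ)·ε̄. -/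
open Finset

/-! The secure deviation is a perturbation bounded by `(1 + γ) ε̄`: the `Q`-error contributes `ε`
and the value error, averaged against the probability vector `p`, contributes `γ ε`. Under attack
the drift term adds `ν D` with `|ν D| ≥ ν Φ > 2 (1 + γ) ε̄`, and the reverse triangle inequality
keeps the sum more than `(1 + γ) ε̄` away from zero. -/

theorem abs_sum_mul_le_of_abs_le_s13 {ι : Type*} (s : Finset ι) {p f : ι → ℝ} {ε : ℝ}
    (hp0 : ∀ i ∈ s, 0 ≤ p i) (hp1 : ∑ i ∈ s, p i = 1) (hf : ∀ i ∈ s, |f i| ≤ ε) :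
    |∑ i ∈ s, p i * f i| ≤ ε :=
  calc |∑ i ∈ s, p i * f i| ≤ ∑ i ∈ s, |p i * f i| := abs_sum_le_sum_abs _ _
    _ ≤ ∑ i ∈ s, p i * ε := sum_le_sum fun i hi => by
        rw [abs_mul, abs_of_nonneg (hp0 i hi)]
        exact mul_le_mul_of_nonneg_left (hf i hi) (hp0 i hi)
    _ = ε := by rw [← sum_mul, hp1, one_mul]

theorem abs_add_mul_le_one_add_mul {a b γ ε : ℝ} (hγ : 0 ≤ γ) (ha : |a| ≤ ε) (hb : |b| ≤ ε) :
    |a + γ * b| ≤ (1 + γ) * ε :=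
  calc |a + γ * b| ≤ |a| + γ * |b| := by
        simpa only [abs_mul, abs_of_nonneg hγ] using abs_add_le a (γ * b)
    _ ≤ ε + γ * ε := by gcongr
    _ = (1 + γ) * ε := by ring

theorem lt_abs_add_of_abs_le_of_two_mul_lt {s d T : ℝ} (hs : |s| ≤ T) (hd : 2 * T < |d|) :
    T < |s + d| := by
  linarith [abs_add' d s]

theorem dynamic_attack_separation_general
    {X : Type*} [Fintype X]
    (p phat : X → ℝ)
    (hp0 : ∀ x, 0 ≤ p x) (hp1 : ∑ x, p x = 1)
    (r Vstar Vhat : X → ℝ) (γ : ℝ) (hγ0 : 0 ≤ γ)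
    (Qhat Qstar : ℝ) (ν ε εbar Φ : ℝ)
    (hν0 : 0 ≤ ν)
    (hεle : ε ≤ εbar)
    (hQ : |Qhat - Qstar| ≤ ε)
    (hV : ∀ x, |Vhat x - Vstar x| ≤ ε)
    (hdrift : |∑ x, (p x - phat x) * (r x + γ * Vstar x)| ≥ Φ)
    (hInfoAdv : ν * Φ > 2 * (1 + γ) * εbar) :
    |Qhat - Qstar + γ * ∑ x, p x * (Vstar x - Vhat x)
        + ν * ∑ x, (p x - phat x) * (r x + γ * Vstar x)| > (1 + γ) * εbar ∧
    |Qhat - Qstar + γ * ∑ x, p x * (Vstar x - Vhat x)| ≤ (1 + γ) * εbar := by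
  have hvalue : |∑ x, p x * (Vstar x - Vhat x)| ≤ ε :=
    abs_sum_mul_le_of_abs_le_s13 univ (fun x _ => hp0 x) hp1 fun x _ => abs_sub_comm (Vhat x) _ ▸ hV x
  have hsecure : |Qhat - Qstar + γ * ∑ x, p x * (Vstar x - Vhat x)| ≤ (1 + γ) * εbar :=
    (abs_add_mul_le_one_add_mul hγ0 hQ hvalue).trans (by gcongr)
  have hattack : 2 * ((1 + γ) * εbar) < |ν * ∑ x, (p x - phat x) * (r x + γ * Vstar x)| := by
    rw [abs_mul, abs_of_nonneg hν0, ← mul_assoc]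
    exact hInfoAdv.trans_le (mul_le_mul_of_nonneg_left hdrift hν0)
  exact ⟨lt_abs_add_of_abs_le_of_two_mul_lt hsecure hattack, hsecure⟩

/-- **Theorem 9 (separation claim):** under the modified information advantage
condition `ν·Φ > 2·(1+γ)·ε̄`, the dynamic-attack deviation limit exceeds the
threshold `(1+γ)·ε̄`, while the secure-case limit stays at or below it. -/
theorem dynamic_attack_separation
    {X : Type*} [Fintype X] [Nonempty X]
    (p phat : X → ℝ)
    (hp0 : ∀ x, 0 ≤ p x) (hp1 : ∑ x, p x = 1)
    (hphat0 : ∀ x, 0 ≤ phat x) (hphat1 : ∑ x, phat x = 1)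
    (r Vstar Vhat : X → ℝ) (γ : ℝ) (hγ0 : 0 ≤ γ) (hγ1 : γ < 1)
    (Qhat Qstar : ℝ) (ν ε εbar Φ : ℝ)
    (hν0 : 0 ≤ ν) (hν1 : ν ≤ 1)
    (hε : 0 ≤ ε) (hεbar : 0 ≤ εbar) (hΦ : 0 ≤ Φ) (hεle : ε ≤ εbar)
    (hQ : |Qhat - Qstar| ≤ ε)
    (hV : ∀ x, |Vhat x - Vstar x| ≤ ε)
    (hdrift : |∑ x, (p x - phat x) * (r x + γ * Vstar x)| ≥ Φ)
    (hInfoAdv : ν * Φ > 2 * (1 + γ) * εbar) :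
    |Qhat - Qstar + γ * ∑ x, p x * (Vstar x - Vhat x)
        + ν * ∑ x, (p x - phat x) * (r x + γ * Vstar x)| > (1 + γ) * εbar ∧
    |Qhat - Qstar + γ * ∑ x, p x * (Vstar x - Vhat x)| ≤ (1 + γ) * εbar :=
  dynamic_attack_separation_general p phat hp0 hp1 r Vstar Vhat γ hγ0 Qhat Qstar ν ε εbar Φ hν0 hεle
    hQ hV hdrift hInfoAdv
end
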